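/- (Theorem 4, exact form) For every N ≥ 1 and p ∈ (0,1), the Shannon entropy of the unlabeled bipartite graph distribution satisfies H_Bu(N,p) = N²·H(p) − 2·log₂(N!) + Σ_ω P̄(ω)·log₂|Aut_u(ω)|, where the sum ranges over all equivalence classes ω under simultaneous row-and-column permutation, P̄(ω) is the probability of ω under the pushforward distribution, and |Aut_u(ω)| is the common size of the stabilizer {(σ,τ) : ∀ i j, A (σ i) (τ j) = A i j} of matrices A in ω. -/

import Mathlib

open Finset

attribute [local instance] Classical.propDecidable

noncomputable section

/-- Equivalence of adjacency matrices under simultaneous row and column permutations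
(both vertex parts unlabeled, the two parts remaining distinguishable). -/
def biRelSetoid (N : ℕ) : Setoid (Fin N → Fin N → Bool) where
  r A B := ∃ σ τ : Equiv.Perm (Fin N), ∀ i j, A (σ i) (τ j) = B i j
  iseqv := by
    refine ⟨fun A => ⟨1, 1, fun i j => rfl⟩, ?_, ?_⟩
    · rintro A B ⟨σ, τ, h⟩
      refine ⟨σ⁻¹, τ⁻¹, fun i j => ?_⟩
      rw [← h (σ⁻¹ i) (τ⁻¹ j), Equiv.Perm.coe_inv, Equiv.Perm.coe_inv, Equiv.apply_symm_apply,
        Equiv.apply_symm_apply]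
    · rintro A B C ⟨σ, τ, h⟩ ⟨σ', τ', h'⟩
      refine ⟨σ * σ', τ * τ', fun i j => ?_⟩
      rw [Equiv.Perm.mul_apply, Equiv.Perm.mul_apply, h (σ' i) (τ' j), h' i j]

instance (N : ℕ) : Fintype (Quotient (biRelSetoid N)) := Fintype.ofFinite _

/-- Number of `true` entries (edges) of an adjacency matrix. -/
def edgeCount {N : ℕ} (A : Fin N → Fin N → Bool) : ℕ :=
  (univ.filter fun ij : Fin N × Fin N => A ij.1 ij.2 = true).card

/-- Probability of a fixed adjacency matrix under i.i.d. Bernoulli(p) entries. -/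
def matProb (N : ℕ) (p : ℝ) (A : Fin N → Fin N → Bool) : ℝ :=
  p ^ edgeCount A * (1 - p) ^ (N ^ 2 - edgeCount A)

/-- Pushforward probability of a class: the unlabeled bipartite graph distribution. -/
def classProbU (N : ℕ) (p : ℝ) (ω : Quotient (biRelSetoid N)) : ℝ :=
  ∑ A : Fin N → Fin N → Bool,
    if Quotient.mk (biRelSetoid N) A = ω then matProb N p A else 0

/-- Shannon entropy (base 2) of the unlabeled bipartite graph distribution. -/
def HBu (N : ℕ) (p : ℝ) : ℝ :=
  ∑ ω : Quotient (biRelSetoid N), -(classProbU N p ω * Real.logb 2 (classProbU N p ω))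

/-- Binary entropy function, base 2. -/
def binEnt (p : ℝ) : ℝ := -(p * Real.logb 2 p) - (1 - p) * Real.logb 2 (1 - p)

/-- Size of the stabilizer `{(σ,τ) : ∀ i j, A (σ i) (τ j) = A i j}` of a matrix. -/
def autUCard {N : ℕ} (A : Fin N → Fin N → Bool) : ℕ :=
  Fintype.card
    {στ : Equiv.Perm (Fin N) × Equiv.Perm (Fin N) // ∀ i j, A (στ.1 i) (στ.2 j) = A i j}

/-! `Perm (Fin N) × Perm (Fin N)` acts on adjacency matrices with the equivalence classes as
orbits, and the Bernoulli product probability `P` is invariant. Hence a class `ω` has mass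
`P̄(ω) = |ω| · P(A)` for any `A ∈ ω`, while orbit–stabilizer gives `|ω| · |Aut_u(ω)| = (N!)²`.
Splitting `log P̄(ω) = log P(A) + log |ω|` turns `H_Bu` into the labeled entropy `N² H(p)`
(entropy is additive over the `N²` independent entries) minus `Σ_ω P̄(ω) log |ω|`. -/

section ProductEntropy

variable {ι α : Type*} [Fintype ι] [DecidableEq ι] [Fintype α]

theorem sum_prod_mul_logb_prod (b : ℝ) (w : α → ℝ) (hw : ∀ a, w a ≠ 0) (hw1 : ∑ a, w a = 1) :
    ∑ x : ι → α, (∏ i, w (x i)) * Real.logb b (∏ i, w (x i))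
      = Fintype.card ι * ∑ a, w a * Real.logb b (w a) := by
  have hcoord (j : ι) : ∑ x : ι → α, (∏ i, w (x i)) * Real.logb b (w (x j))
      = ∑ a, w a * Real.logb b (w a) := by
    have hsplit (x : ι → α) : (∏ i, w (x i)) * Real.logb b (w (x j))
        = ∏ i, w (x i) * if i = j then Real.logb b (w (x i)) else 1 := by
      rw [prod_mul_distrib, prod_ite_eq', if_pos (mem_univ j)]
    simp_rw [hsplit]
    rw [← Fintype.prod_sum fun i a => w a * if i = j then Real.logb b (w a) else 1]
    rw [Fintype.prod_eq_single j fun i hi => by simp [hi, hw1]]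
    simp
  calc _ = ∑ j, ∑ x : ι → α, (∏ i, w (x i)) * Real.logb b (w (x j)) := by
        simp_rw [Real.logb_prod _ _ fun i _ => hw _, mul_sum]
        exact sum_comm
    _ = _ := by simp only [hcoord, sum_const, card_univ, nsmul_eq_mul]

theorem sum_prod_eq_one (w : α → ℝ) (hw1 : ∑ a, w a = 1) :
    ∑ x : ι → α, ∏ i, w (x i) = 1 := by
  rw [← Fintype.prod_sum fun _ => w, hw1, prod_const_one]

end ProductEntropy

section QuotientEntropy

variable {X : Type*} [Fintype X] {s : Setoid X}

def quotientMass (P : X → ℝ) (ω : Quotient s) : ℝ :=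
  ∑ x, if Quotient.mk s x = ω then P x else 0

theorem card_fiber_pos (ω : Quotient s) : 0 < #{x | Quotient.mk s x = ω} :=
  card_pos.2 ⟨ω.out, by simp⟩

theorem quotientMass_eq_card_mul {P : X → ℝ} (hP : ∀ x y, x ≈ y → P x = P y) (ω : Quotient s) :
    quotientMass P ω = #{x | Quotient.mk s x = ω} * P ω.out := by
  rw [quotientMass, ← sum_filter, sum_congr rfl fun x hx => hP x ω.out
    (Quotient.exact ((mem_filter.1 hx).2.trans (Quotient.out_eq ω).symm)), sum_const,
    nsmul_eq_mul]

variable [Fintype (Quotient s)]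

theorem sum_quotientMass_mul (P : X → ℝ) (f : Quotient s → ℝ) :
    ∑ ω, quotientMass P ω * f ω = ∑ x, P x * f (Quotient.mk s x) := by
  simp only [quotientMass, sum_mul, ite_mul, zero_mul]
  rw [sum_comm]
  simp only [sum_ite_eq, mem_univ, if_true]

theorem sum_negMul_logb_quotientMass (b : ℝ) {P : X → ℝ} (hP0 : ∀ x, 0 < P x)
    (hP : ∀ x y, x ≈ y → P x = P y) :
    ∑ ω : Quotient s, -(quotientMass P ω * Real.logb b (quotientMass P ω))
      = ∑ x, -(P x * Real.logb b (P x))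
        - ∑ ω : Quotient s, quotientMass P ω * Real.logb b #{x | Quotient.mk s x = ω} := by
  have hlog (ω : Quotient s) : Real.logb b (quotientMass P ω)
      = Real.logb b #{x | Quotient.mk s x = ω} + Real.logb b (P ω.out) := by
    rw [quotientMass_eq_card_mul hP, Real.logb_mul (by exact_mod_cast (card_fiber_pos ω).ne')
      (hP0 _).ne']
  have hout : ∑ ω : Quotient s, quotientMass P ω * Real.logb b (P ω.out)
      = ∑ x, P x * Real.logb b (P x) := by
    rw [sum_quotientMass_mul P fun ω => Real.logb b (P ω.out)]
    exact sum_congr rfl fun x _ => by rw [hP _ _ (Quotient.mk_out x)]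
  simp only [hlog, mul_add, sum_add_distrib, hout, sum_neg_distrib]
  ring

end QuotientEntropy

section OrbitEntropy

open MulAction

variable {G X : Type*} [Group G] [MulAction G X] [Fintype X] {s : Setoid X}

theorem card_fiber_mul_card_stabilizer (hs : ∀ x y : X, x ≈ y ↔ y ∈ orbit G x)
    (ω : Quotient s) :
    #{x | Quotient.mk s x = ω} * Nat.card (stabilizer G ω.out) = Nat.card G := by
  have hfiber : #{x | Quotient.mk s x = ω} = (orbit G ω.out).ncard := by
    rw [← Set.ncard_coe_finset]
    congr 1
    ext x
    rw [mem_coe, mem_filter, ← hs]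
    exact ⟨fun h => h.2 ▸ Quotient.mk_out x,
      fun h => ⟨mem_univ x, (Quotient.sound h).symm.trans (Quotient.out_eq ω)⟩⟩
  rw [hfiber, ← index_stabilizer, Subgroup.index_mul_card]

variable [Finite G] [Fintype (Quotient s)]

theorem sum_negMul_logb_quotientMass_of_orbits (b : ℝ)
    (hs : ∀ x y : X, x ≈ y ↔ y ∈ orbit G x) {P : X → ℝ} (hP0 : ∀ x, 0 < P x)
    (hP1 : ∑ x, P x = 1) (hP : ∀ (g : G) x, P (g • x) = P x) :
    ∑ ω : Quotient s, -(quotientMass P ω * Real.logb b (quotientMass P ω))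
      = ∑ x, -(P x * Real.logb b (P x)) - Real.logb b (Nat.card G)
        + ∑ ω : Quotient s, quotientMass P ω * Real.logb b (Nat.card (stabilizer G ω.out)) := by
  have hPs (x y : X) (hxy : x ≈ y) : P x = P y := by
    obtain ⟨g, rfl⟩ := (hs x y).1 hxy
    exact (hP g x).symm
  have hlog (ω : Quotient s) : Real.logb b #{x | Quotient.mk s x = ω}
      = Real.logb b (Nat.card G) - Real.logb b (Nat.card (stabilizer G ω.out)) := by
    rw [← card_fiber_mul_card_stabilizer hs ω, Nat.cast_mul, Real.logb_mul
      (by exact_mod_cast (card_fiber_pos ω).ne') (by exact_mod_cast Nat.card_pos.ne')]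
    ring
  have hmass : ∑ ω : Quotient s, quotientMass P ω = 1 := by
    simpa [hP1] using sum_quotientMass_mul (s := s) P 1
  rw [sum_negMul_logb_quotientMass b hP0 hPs]
  simp only [hlog, mul_sub, sum_sub_distrib, ← sum_mul, hmass]
  ring

end OrbitEntropy

section BipartiteAction

open Equiv

variable {α β γ : Type*}

instance permProdMulAction : MulAction (Perm α × Perm β) (α → β → γ) where
  smul g A i j := A (g.1⁻¹ i) (g.2⁻¹ j)
  one_smul _ := rfl
  mul_smul _ _ _ := rfl

theorem perm_prod_smul_apply (g : Perm α × Perm β) (A : α → β → γ) (i : α) (j : β) :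
    (g • A) i j = A (g.1⁻¹ i) (g.2⁻¹ j) := rfl

end BipartiteAction

section RandomBipartite

open Equiv MulAction

variable {N : ℕ}

theorem biRelSetoid_iff_mem_orbit (A B : Fin N → Fin N → Bool) :
    (biRelSetoid N).r A B ↔ B ∈ orbit (Perm (Fin N) × Perm (Fin N)) A := by
  constructor
  · rintro ⟨σ, τ, h⟩
    exact ⟨(σ⁻¹, τ⁻¹), funext₂ fun i j => by simpa [perm_prod_smul_apply] using h i j⟩
  · rintro ⟨g, rfl⟩
    exact ⟨g.1⁻¹, g.2⁻¹, fun i j => rfl⟩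

theorem card_stabilizer_eq_autUCard (A : Fin N → Fin N → Bool) :
    Nat.card (stabilizer (Perm (Fin N) × Perm (Fin N)) A) = autUCard A := by
  rw [autUCard, ← Nat.card_eq_fintype_card]
  refine Nat.card_congr
    { toFun g := ⟨g.1⁻¹, fun i j => ?_⟩
      invFun g := ⟨g.1⁻¹, ?_⟩
      left_inv g := by simp
      right_inv g := by simp }
  · exact congrFun₂ (mem_stabilizer_iff.1 g.2) i j
  · exact mem_stabilizer_iff.2 (funext₂ fun i j => by simpa [perm_prod_smul_apply] using g.2 i j)

def bernoulliWeight (p : ℝ) (b : Bool) : ℝ := if b then p else 1 - p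

theorem sum_bernoulliWeight (p : ℝ) : ∑ b, bernoulliWeight p b = 1 := by
  simp [bernoulliWeight]

variable {p : ℝ}

theorem bernoulliWeight_ne_zero (hp0 : 0 < p) (hp1 : p < 1) (b : Bool) :
    bernoulliWeight p b ≠ 0 := by
  cases b
  exacts [(sub_pos.2 hp1).ne', hp0.ne']

theorem matProb_eq_prod (A : Fin N → Fin N → Bool) :
    matProb N p A = ∏ ij : Fin N × Fin N, bernoulliWeight p (A ij.1 ij.2) := by
  rw [matProb, edgeCount]
  unfold bernoulliWeight
  rw [prod_ite, prod_const, prod_const]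
  congr
  have hsplit := card_filter_add_card_filter_not (s := univ)
    fun ij : Fin N × Fin N => A ij.1 ij.2 = true
  rw [card_univ, Fintype.card_prod, Fintype.card_fin] at hsplit
  rw [sq]
  omega

theorem matProb_smul (g : Perm (Fin N) × Perm (Fin N)) (A : Fin N → Fin N → Bool) :
    matProb N p (g • A) = matProb N p A := by
  simp only [matProb_eq_prod]
  exact (Fintype.prod_equiv (g.1.prodCongr g.2) _ _ fun ij => by simp [perm_prod_smul_apply]).symm

theorem matProb_pos (hp0 : 0 < p) (hp1 : p < 1) (A : Fin N → Fin N → Bool) :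
    0 < matProb N p A :=
  mul_pos (pow_pos hp0 _) (pow_pos (sub_pos.2 hp1) _)

theorem sum_comp_matProb (F : ℝ → ℝ) :
    ∑ A : Fin N → Fin N → Bool, F (matProb N p A)
      = ∑ B : Fin N × Fin N → Bool, F (∏ ij, bernoulliWeight p (B ij)) :=
  Fintype.sum_equiv (Equiv.curry _ _ _).symm _ _ fun A => by rw [matProb_eq_prod]; rfl

theorem sum_matProb : ∑ A : Fin N → Fin N → Bool, matProb N p A = 1 :=
  (sum_comp_matProb fun x => x).trans (sum_prod_eq_one _ (sum_bernoulliWeight p))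

theorem sum_matProb_mul_logb (hp0 : 0 < p) (hp1 : p < 1) :
    ∑ A : Fin N → Fin N → Bool, matProb N p A * Real.logb 2 (matProb N p A)
      = -((N : ℝ) ^ 2 * binEnt p) := by
  refine (sum_comp_matProb fun x => x * Real.logb 2 x).trans ?_
  rw [sum_prod_mul_logb_prod 2 _ (bernoulliWeight_ne_zero hp0 hp1) (sum_bernoulliWeight p),
    Fintype.sum_bool]
  simp only [Fintype.card_prod, Fintype.card_fin, bernoulliWeight, binEnt, if_true,
    Bool.false_eq_true, if_false]
  push_cast
  ring

theorem classProbU_eq_quotientMass : classProbU N p = quotientMass (matProb N p) := rfl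

end RandomBipartite

theorem unlabeled_entropy_exact_general (N : ℕ) (p : ℝ)
    (hp0 : 0 < p) (hp1 : p < 1) :
    HBu N p =
      (N : ℝ) ^ 2 * binEnt p - 2 * Real.logb 2 (N.factorial : ℝ)
        + ∑ ω : Quotient (biRelSetoid N),
            classProbU N p ω * Real.logb 2 ((autUCard (Quotient.out ω) : ℝ)) := by
  have hcard : Nat.card (Equiv.Perm (Fin N) × Equiv.Perm (Fin N)) = N.factorial ^ 2 := by
    rw [Nat.card_prod, Nat.card_perm, Nat.card_fin, sq]
  rw [HBu, classProbU_eq_quotientMass, sum_negMul_logb_quotientMass_of_orbits 2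
    biRelSetoid_iff_mem_orbit (matProb_pos hp0 hp1) sum_matProb matProb_smul, hcard]
  simp only [card_stabilizer_eq_autUCard, sum_neg_distrib, sum_matProb_mul_logb hp0 hp1]
  push_cast
  rw [Real.logb_pow]
  ring

/-- Theorem 4 (exact form): the entropy of the unlabeled bipartite graph distribution
satisfies `H_Bu(N,p) = N²·H(p) − 2·log₂(N!) + Σ_ω P̄(ω)·log₂|Aut_u(ω)|`. -/
theorem unlabeled_entropy_exact (N : ℕ) (hN : 1 ≤ N) (p : ℝ)
    (hp0 : 0 < p) (hp1 : p < 1) :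
    HBu N p =
      (N : ℝ) ^ 2 * binEnt p - 2 * Real.logb 2 (N.factorial : ℝ)
        + ∑ ω : Quotient (biRelSetoid N),
            classProbU N p ω * Real.logb 2 ((autUCard (Quotient.out ω) : ℝ)) :=
  unlabeled_entropy_exact_general N p hp0 hp1
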